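/- arXiv:2512.03428 — 2 statements merged into one kernel-verified Lean document; each statement's English description precedes it below -/
import Mathlib

section
/- Let X and ε_Y be independent mean-zero random variables with unit variances and finite fourth moments, let a ≠ 0, set Y := aX + ε_Y, b := a/(1 + a²), and ε_X := X - bY. If the fourth cumulant (excess kurtosis) of ε_Y is nonzero, then Y and ε_X are NOT independent. -/
/-!
Put `u = 1 - a b = 1 / (1 + a²)`, so that `Y = a X + ε_Y` and `ε_X = u X - b ε_Y` with `b = a u`;
these are uncorrelated linear forms in the independent standardized variables `X`, `ε_Y`.
For such forms `U = p X + q Z`, `V = r X + s Z` the joint fourth cumulants are additive: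
`E[U²V²] - E[U²] E[V²] - 2 E[UV]² = p²r² κ(X) + q²s² κ(Z)` and
`E[U V³] - 3 E[UV] E[V²] = p r³ κ(X) + q s³ κ(Z)`, where `κ(W) = E[W⁴] - 3`.
Independence of `Y` and `ε_X` makes both left-hand sides vanish, which gives
`a²u² (κ(X) + κ(ε_Y)) = 0` and `a u³ (κ(X) - a² κ(ε_Y)) = 0`, hence `(1 + a²) κ(ε_Y) = 0`.
-/

open MeasureTheory ProbabilityTheory

theorem MeasureTheory.MemLp.integrable_pow_of_le {Ω : Type*} [MeasurableSpace Ω]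
    {μ : Measure Ω} [IsFiniteMeasure μ] {f : Ω → ℝ} {n k : ℕ} (hf : MemLp f n μ) (hk : k ≤ n) :
    Integrable (fun ω => f ω ^ k) μ :=
  (hf.mono_exponent (by exact_mod_cast hk)).integrable_norm_pow'.mono
    (hf.aestronglyMeasurable.pow k) (ae_of_all _ fun ω => by simp)

namespace ProbabilityTheory.IndepFun

variable {Ω : Type*} [MeasurableSpace Ω] {μ : Measure Ω} {X Z : Ω → ℝ}

theorem integral_pow_mul_pow (h : IndepFun X Z μ) (hX : AEStronglyMeasurable X μ)
    (hZ : AEStronglyMeasurable Z μ) (i j : ℕ) :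
    ∫ ω, X ω ^ i * Z ω ^ j ∂μ = (∫ ω, X ω ^ i ∂μ) * ∫ ω, Z ω ^ j ∂μ :=
  (h.comp (measurable_id.pow_const i) (measurable_id.pow_const j)).integral_fun_mul_eq_mul_integral
    (hX.pow i) (hZ.pow j)

variable [IsFiniteMeasure μ]

theorem integrable_pow_mul_pow {n i j : ℕ} (h : IndepFun X Z μ) (hX : MemLp X n μ)
    (hZ : MemLp Z n μ) (hi : i ≤ n) (hj : j ≤ n) : Integrable (fun ω => X ω ^ i * Z ω ^ j) μ :=
  (h.comp (measurable_id.pow_const i) (measurable_id.pow_const j)).integrable_mul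
    (hX.integrable_pow_of_le hi) (hZ.integrable_pow_of_le hj)

theorem integral_linear_sq (h : IndepFun X Z μ) (hX : MemLp X 2 μ) (hZ : MemLp Z 2 μ)
    (hX1 : ∫ ω, X ω ∂μ = 0) (hX2 : ∫ ω, X ω ^ 2 ∂μ = 1) (hZ2 : ∫ ω, Z ω ^ 2 ∂μ = 1)
    (p q : ℝ) : ∫ ω, (p * X ω + q * Z ω) ^ 2 ∂μ = p ^ 2 + q ^ 2 := by
  have h20 : Integrable (fun ω => X ω ^ 2) μ := hX.integrable_sq
  have h02 : Integrable (fun ω => Z ω ^ 2) μ := hZ.integrable_sq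
  have h11 : Integrable (fun ω => X ω * Z ω) μ :=
    h.integrable_mul (hX.integrable one_le_two) (hZ.integrable one_le_two)
  have hXZ : ∫ ω, X ω * Z ω ∂μ = 0 := by
    simpa [hX1] using h.integral_pow_mul_pow hX.aestronglyMeasurable hZ.aestronglyMeasurable 1 1
  calc ∫ ω, (p * X ω + q * Z ω) ^ 2 ∂μ
      = ∫ ω, (p ^ 2 * X ω ^ 2 + 2 * p * q * (X ω * Z ω) + q ^ 2 * Z ω ^ 2) ∂μ := by
        congr 1; ext ω; ring
    _ = p ^ 2 + q ^ 2 := by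
        rw [integral_add (by fun_prop) (by fun_prop), integral_add (by fun_prop) (by fun_prop)]
        simp only [integral_const_mul, hX2, hZ2, hXZ]
        ring

theorem integral_quartic_form (h : IndepFun X Z μ) (hX : MemLp X 4 μ) (hZ : MemLp Z 4 μ)
    (hX1 : ∫ ω, X ω ∂μ = 0) (hZ1 : ∫ ω, Z ω ∂μ = 0)
    (hX2 : ∫ ω, X ω ^ 2 ∂μ = 1) (hZ2 : ∫ ω, Z ω ^ 2 ∂μ = 1) (c₀ c₁ c₂ c₃ c₄ : ℝ) :
    ∫ ω, (c₄ * X ω ^ 4 + c₃ * (X ω ^ 3 * Z ω) + c₂ * (X ω ^ 2 * Z ω ^ 2) + c₁ * (X ω * Z ω ^ 3)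
      + c₀ * Z ω ^ 4) ∂μ = c₄ * ∫ ω, X ω ^ 4 ∂μ + c₂ + c₀ * ∫ ω, Z ω ^ 4 ∂μ := by
  have hXm := hX.aestronglyMeasurable
  have hZm := hZ.aestronglyMeasurable
  have h40 : Integrable (fun ω => X ω ^ 4) μ := hX.integrable_pow_of_le (n := 4) le_rfl
  have h04 : Integrable (fun ω => Z ω ^ 4) μ := hZ.integrable_pow_of_le (n := 4) le_rfl
  have h31 : Integrable (fun ω => X ω ^ 3 * Z ω) μ := by
    simpa using
      h.integrable_pow_mul_pow (n := 4) (i := 3) (j := 1) hX hZ (by norm_num) (by norm_num)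
  have h22 : Integrable (fun ω => X ω ^ 2 * Z ω ^ 2) μ :=
    h.integrable_pow_mul_pow (n := 4) hX hZ (by norm_num) (by norm_num)
  have h13 : Integrable (fun ω => X ω * Z ω ^ 3) μ := by
    simpa using
      h.integrable_pow_mul_pow (n := 4) (i := 1) (j := 3) hX hZ (by norm_num) (by norm_num)
  have e31 : ∫ ω, X ω ^ 3 * Z ω ∂μ = 0 := by
    simpa [hZ1] using h.integral_pow_mul_pow hXm hZm 3 1
  have e22 : ∫ ω, X ω ^ 2 * Z ω ^ 2 ∂μ = 1 := by
    simpa [hX2, hZ2] using h.integral_pow_mul_pow hXm hZm 2 2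
  have e13 : ∫ ω, X ω * Z ω ^ 3 ∂μ = 0 := by
    simpa [hX1] using h.integral_pow_mul_pow hXm hZm 1 3
  rw [integral_add (by fun_prop) (by fun_prop), integral_add (by fun_prop) (by fun_prop),
    integral_add (by fun_prop) (by fun_prop), integral_add (by fun_prop) (by fun_prop)]
  simp only [integral_const_mul, e31, e22, e13]
  ring

theorem integral_linear_sq_mul_sq_sub (h : IndepFun X Z μ) (hX : MemLp X 4 μ) (hZ : MemLp Z 4 μ)
    (hX1 : ∫ ω, X ω ∂μ = 0) (hZ1 : ∫ ω, Z ω ∂μ = 0)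
    (hX2 : ∫ ω, X ω ^ 2 ∂μ = 1) (hZ2 : ∫ ω, Z ω ^ 2 ∂μ = 1) (p q r s : ℝ) :
    ∫ ω, (p * X ω + q * Z ω) ^ 2 * (r * X ω + s * Z ω) ^ 2 ∂μ
      - (∫ ω, (p * X ω + q * Z ω) ^ 2 ∂μ) * ∫ ω, (r * X ω + s * Z ω) ^ 2 ∂μ
      = p ^ 2 * r ^ 2 * (∫ ω, X ω ^ 4 ∂μ - 3) + q ^ 2 * s ^ 2 * (∫ ω, Z ω ^ 4 ∂μ - 3)
        + 2 * (p * r + q * s) ^ 2 := by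
  have expand : ∀ ω, (p * X ω + q * Z ω) ^ 2 * (r * X ω + s * Z ω) ^ 2
      = p ^ 2 * r ^ 2 * X ω ^ 4 + (2 * p ^ 2 * r * s + 2 * p * q * r ^ 2) * (X ω ^ 3 * Z ω)
        + (p ^ 2 * s ^ 2 + 4 * p * q * r * s + q ^ 2 * r ^ 2) * (X ω ^ 2 * Z ω ^ 2)
        + (2 * q ^ 2 * r * s + 2 * p * q * s ^ 2) * (X ω * Z ω ^ 3) + q ^ 2 * s ^ 2 * Z ω ^ 4 :=
    fun ω => by ring
  simp only [expand, h.integral_quartic_form hX hZ hX1 hZ1 hX2 hZ2,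
    h.integral_linear_sq (hX.mono_exponent (by norm_num)) (hZ.mono_exponent (by norm_num))
      hX1 hX2 hZ2]
  ring

theorem integral_linear_mul_cube (h : IndepFun X Z μ) (hX : MemLp X 4 μ) (hZ : MemLp Z 4 μ)
    (hX1 : ∫ ω, X ω ∂μ = 0) (hZ1 : ∫ ω, Z ω ∂μ = 0)
    (hX2 : ∫ ω, X ω ^ 2 ∂μ = 1) (hZ2 : ∫ ω, Z ω ^ 2 ∂μ = 1) (p q r s : ℝ) :
    ∫ ω, (p * X ω + q * Z ω) * (r * X ω + s * Z ω) ^ 3 ∂μ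
      = p * r ^ 3 * (∫ ω, X ω ^ 4 ∂μ - 3) + q * s ^ 3 * (∫ ω, Z ω ^ 4 ∂μ - 3)
        + 3 * (p * r + q * s) * (r ^ 2 + s ^ 2) := by
  have expand : ∀ ω, (p * X ω + q * Z ω) * (r * X ω + s * Z ω) ^ 3
      = p * r ^ 3 * X ω ^ 4 + (3 * p * r ^ 2 * s + q * r ^ 3) * (X ω ^ 3 * Z ω)
        + (3 * p * r * s ^ 2 + 3 * q * r ^ 2 * s) * (X ω ^ 2 * Z ω ^ 2)
        + (p * s ^ 3 + 3 * q * r * s ^ 2) * (X ω * Z ω ^ 3) + q * s ^ 3 * Z ω ^ 4 :=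
    fun ω => by ring
  simp only [expand, h.integral_quartic_form hX hZ hX1 hZ1 hX2 hZ2]
  ring

end ProbabilityTheory.IndepFun

theorem eq_zero_of_joint_cumulant_eqs {a b κ κ' : ℝ} (ha : a ≠ 0) (hb : b * (1 + a ^ 2) = a)
    (h₁ : a ^ 2 * (1 - a * b) ^ 2 * κ + b ^ 2 * κ' = 0)
    (h₂ : a * (1 - a * b) ^ 3 * κ - b ^ 3 * κ' = 0) : κ' = 0 := by
  set u := 1 - a * b
  have hbu : b = a * u := by linear_combination hb
  have hu : u ≠ 0 := left_ne_zero_of_mul_eq_one (b := 1 + a ^ 2) (by linear_combination (-a) * hb)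
  rw [hbu] at h₁ h₂
  have hsum : κ + κ' = 0 := by
    have : a ^ 2 * u ^ 2 * (κ + κ') = 0 := by linear_combination h₁
    simpa [ha, hu] using this
  have hdiff : κ - a ^ 2 * κ' = 0 := by
    have : a * u ^ 3 * (κ - a ^ 2 * κ') = 0 := by linear_combination h₂
    simpa [ha, hu] using this
  have : (1 + a ^ 2) * κ' = 0 := by linear_combination hsum - hdiff
  simpa [(by positivity : (0 : ℝ) < 1 + a ^ 2).ne'] using this

theorem stmt_7_general {Ω : Type*} [MeasurableSpace Ω] (μ : Measure Ω) [IsProbabilityMeasure μ]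
    (X εY : Ω → ℝ)
    (hIndep : IndepFun X εY μ)
    (hX4 : MemLp X 4 μ) (hε4 : MemLp εY 4 μ)
    (hXmean : ∫ ω, X ω ∂μ = 0) (hεmean : ∫ ω, εY ω ∂μ = 0)
    (hXvar : ∫ ω, (X ω) ^ 2 ∂μ = 1) (hεvar : ∫ ω, (εY ω) ^ 2 ∂μ = 1)
    (a : ℝ) (ha : a ≠ 0)
    (Y : Ω → ℝ) (hY : Y = fun ω => a * X ω + εY ω)
    (b : ℝ) (hb : b = a / (1 + a ^ 2))
    (εX : Ω → ℝ) (hεX : εX = fun ω => X ω - b * Y ω)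
    (hκ : (∫ ω, (εY ω) ^ 4 ∂μ) - 3 ≠ 0) :
    ¬ IndepFun Y εX μ := by
  intro hind
  have hb' : b * (1 + a ^ 2) = a := by rw [hb]; field_simp
  have huncorr : a * (1 - a * b) + 1 * -b = 0 := by linear_combination -hb'
  have hYlin : Y = fun ω => a * X ω + 1 * εY ω := by simp [hY]
  have hεXlin : εX = fun ω => (1 - a * b) * X ω + -b * εY ω := by
    rw [hεX, hY]; ext ω; ring
  rw [hYlin, hεXlin] at hind
  have hXm := hX4.aestronglyMeasurable
  have hεm := hε4.aestronglyMeasurable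
  have hcov := hind.integral_pow_mul_pow (by fun_prop) (by fun_prop) 2 2
  have hcube := hind.integral_pow_mul_pow (by fun_prop) (by fun_prop) 1 3
  have hYmean : ∫ ω, (a * X ω + 1 * εY ω) ∂μ = 0 := by
    have hXi : Integrable X μ := hX4.integrable (by norm_num)
    have hεi : Integrable εY μ := hε4.integrable (by norm_num)
    rw [integral_add (by fun_prop) (by fun_prop)]
    simp [integral_const_mul, hXmean, hεmean]
  beta_reduce at hcov hcube
  rw [← sub_eq_zero, hIndep.integral_linear_sq_mul_sq_sub hX4 hε4 hXmean hεmean hXvar hεvar,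
    huncorr] at hcov
  simp only [pow_one] at hcube
  rw [hYmean, zero_mul,
    hIndep.integral_linear_mul_cube hX4 hε4 hXmean hεmean hXvar hεvar, huncorr] at hcube
  exact hκ (eq_zero_of_joint_cumulant_eqs (κ := ∫ ω, X ω ^ 4 ∂μ - 3) ha hb'
    (by linear_combination hcov) (by linear_combination hcube))

/-- If X and ε_Y are independent mean-zero unit-variance random variables with
finite fourth moments, a ≠ 0, Y := aX + ε_Y, b := a/(1+a²), ε_X := X - bY,
and the excess kurtosis of ε_Y is nonzero, then Y and ε_X are not independent. -/
theorem stmt_7 {Ω : Type*} [MeasurableSpace Ω] (μ : Measure Ω) [IsProbabilityMeasure μ]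
    (X εY : Ω → ℝ) (hmX : Measurable X) (hmε : Measurable εY)
    (hIndep : IndepFun X εY μ)
    (hX4 : MemLp X 4 μ) (hε4 : MemLp εY 4 μ)
    (hXmean : ∫ ω, X ω ∂μ = 0) (hεmean : ∫ ω, εY ω ∂μ = 0)
    (hXvar : ∫ ω, (X ω) ^ 2 ∂μ = 1) (hεvar : ∫ ω, (εY ω) ^ 2 ∂μ = 1)
    (a : ℝ) (ha : a ≠ 0)
    (Y : Ω → ℝ) (hY : Y = fun ω => a * X ω + εY ω)
    (b : ℝ) (hb : b = a / (1 + a ^ 2))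
    (εX : Ω → ℝ) (hεX : εX = fun ω => X ω - b * Y ω)
    (hκ : (∫ ω, (εY ω) ^ 4 ∂μ) - 3 ≠ 0) :
    ¬ IndepFun Y εX μ :=
  stmt_7_general μ X εY hIndep hX4 hε4 hXmean hεmean hXvar hεvar a ha Y hY b hb εX hεX hκ
end

section
/- If Z is a real random variable whose characteristic function satisfies φ_Z(t) = exp(q(t)) for a real polynomial q of degree at most 2 with q(0)=0 for all t (Marcinkiewicz-type conclusion used in Skitovich–Darmois), and |φ_Z(t)| ≤ 1 for all t, then q(t) = iμt - σ²t²/2 for some μ ∈ ℝ and σ² ≥ 0, i.e., Z is Gaussian. -/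
open MeasureTheory ProbabilityTheory Polynomial Complex
open scoped ComplexConjugate

/-! Write `φ t = exp (a t + b t²)`. The bound `‖φ t‖ ≤ 1` says `Re a · t + Re b · t² ≤ 0` for
all real `t`, so `Re a = 0` and `Re b ≤ 0`. The symmetry `φ (-t) = conj (φ t)` then gives
`exp (2 i Im b · t²) = 1` for all `t`, and `t² = 1 / |Im b|` forces `Im b = 0`. Hence `φ` is the
characteristic function of the Gaussian with mean `Im a` and variance `-2 Re b`, and a
characteristic function determines its law. -/

lemma Polynomial.eval_eq_of_natDegree_le_two {R : Type*} [CommSemiring R] {q : R[X]}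
    (hdeg : q.natDegree ≤ 2) (h0 : q.eval 0 = 0) (z : R) :
    q.eval z = q.coeff 1 * z + q.coeff 2 * z ^ 2 := by
  rw [eval_eq_sum_range' (n := 3) (by omega), Finset.sum_range_succ, Finset.sum_range_succ,
    Finset.sum_range_one, coeff_zero_eq_eval_zero, h0]
  ring

lemma eq_zero_and_nonpos_of_forall_mul_add_mul_sq_nonpos {α β : ℝ}
    (h : ∀ t : ℝ, α * t + β * t ^ 2 ≤ 0) : α = 0 ∧ β ≤ 0 := by
  have hβ : β ≤ 0 := by linarith [h 1, h (-1)]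
  refine ⟨?_, hβ⟩
  -- at `t₀ = α / (1 - β)` the quadratic equals `t₀ ^ 2`
  set t₀ := α / (1 - β) with ht₀
  have hα : α = t₀ * (1 - β) := by rw [ht₀, div_mul_cancel₀ _ (by linarith)]
  have : t₀ ^ 2 ≤ 0 := calc
    t₀ ^ 2 = α * t₀ + β * t₀ ^ 2 := by rw [hα]; ring
    _ ≤ 0 := h t₀
  rw [hα, pow_eq_zero_iff two_ne_zero |>.mp (le_antisymm this (sq_nonneg t₀)), zero_mul]

lemma Complex.eq_zero_of_forall_exp_mul_sq_mul_I_eq_one {c : ℝ}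
    (h : ∀ t : ℝ, exp (c * t ^ 2 * I) = 1) : c = 0 := by
  -- at `t ^ 2 = 1 / |c|` the exponent is `c / |c| * I`, inside the strip where `exp` is injective
  have hsq : Real.sqrt (1 / |c|) ^ 2 = 1 / |c| := Real.sq_sqrt (by positivity)
  have hexp := h (Real.sqrt (1 / |c|))
  rw [← ofReal_pow, hsq, ← ofReal_mul, mul_one_div] at hexp
  have hbound : abs (c / |c|) ≤ 1 := by rw [abs_div, abs_abs]; exact div_self_le_one _
  have hlog := log_exp (x := (c / |c| : ℝ) * I)
    (by simp; linarith [neg_abs_le (c / |c|), Real.pi_gt_three])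
    (by simp; linarith [le_abs_self (c / |c|), Real.pi_gt_three])
  rw [hexp, log_one, eq_comm, mul_eq_zero, ofReal_eq_zero, div_eq_zero_iff, abs_eq_zero] at hlog
  simpa [I_ne_zero] using hlog

section CharFunExpQuadratic

variable {μ : Measure ℝ} [IsProbabilityMeasure μ] {a b : ℂ}

lemma re_eq_zero_and_re_nonpos_of_charFun_eq_exp
    (h : ∀ t : ℝ, charFun μ t = exp (a * t + b * t ^ 2)) : a.re = 0 ∧ b.re ≤ 0 := by
  refine eq_zero_and_nonpos_of_forall_mul_add_mul_sq_nonpos fun t ↦ ?_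
  have := norm_charFun_le_one (μ := μ) t
  rw [h, norm_exp, Real.exp_le_one_iff] at this
  simpa [← ofReal_pow] using this

lemma im_eq_zero_of_charFun_eq_exp
    (h : ∀ t : ℝ, charFun μ t = exp (a * t + b * t ^ 2)) : b.im = 0 := by
  have ha := (re_eq_zero_and_re_nonpos_of_charFun_eq_exp h).1
  suffices ∀ t : ℝ, exp ((-2 * b.im : ℝ) * t ^ 2 * I) = 1 by
    linarith [eq_zero_of_forall_exp_mul_sq_mul_I_eq_one this]
  intro t
  have hconj : exp (conj (a * t + b * t ^ 2)) = exp (-a * t + b * t ^ 2) := by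
    rw [exp_conj, ← h, ← charFun_neg, h]; push_cast; ring_nf
  have hdiff :
      conj (a * t + b * t ^ 2) - (-a * t + b * t ^ 2) = (-2 * b.im : ℝ) * t ^ 2 * I := by
    have hre : (a.re : ℂ) = 0 := by simp [ha]
    simp only [map_add, map_mul, map_pow, conj_ofReal]
    linear_combination (norm := (push_cast; ring))
      (t : ℂ) * add_conj a - (t : ℂ) ^ 2 * sub_conj b + 2 * t * hre
  rw [← hdiff, exp_sub, hconj, div_self (exp_ne_zero _)]

lemma exists_eq_mul_I_sub_of_charFun_eq_exp
    (h : ∀ t : ℝ, charFun μ t = exp (a * t + b * t ^ 2)) :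
    ∃ m v : ℝ, 0 ≤ v ∧ ∀ t : ℝ, a * t + b * t ^ 2 = m * t * I - v * t ^ 2 / 2 := by
  obtain ⟨ha_re, hb_re⟩ := re_eq_zero_and_re_nonpos_of_charFun_eq_exp h
  have hb_im := im_eq_zero_of_charFun_eq_exp h
  refine ⟨a.im, -2 * b.re, by linarith, fun t ↦ ?_⟩
  have ha : (a.im : ℂ) * I = a := by simpa [ha_re] using re_add_im a
  have hb : (b.re : ℂ) = b := by simpa [hb_im] using re_add_im b
  push_cast
  linear_combination (t : ℂ) * ha.symm + (t : ℂ) ^ 2 * hb.symm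

end CharFunExpQuadratic

/-- Marcinkiewicz-type step: if the characteristic function of Z equals
exp(q(t)) for a polynomial q of degree at most 2 with q(0) = 0, then
φ_Z(t) = exp(iμt - σ²t²/2) for some μ ∈ ℝ and σ² ≥ 0, i.e. Z is Gaussian. -/
theorem stmt_17 {Ω : Type*} [MeasurableSpace Ω] (P : Measure Ω) [IsProbabilityMeasure P]
    (Z : Ω → ℝ) (hmZ : Measurable Z)
    (φ : ℝ → ℂ)
    (hφ : φ = fun (t : ℝ) => ∫ ω, Complex.exp ((t : ℂ) * Z ω * Complex.I) ∂P)
    (q : Polynomial ℂ) (hdeg : q.natDegree ≤ 2) (h0 : q.eval 0 = 0)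
    (hq : ∀ t : ℝ, φ t = Complex.exp (q.eval (t : ℂ))) :
    ∃ (m : ℝ) (v : ℝ), 0 ≤ v ∧
      (∀ t : ℝ, φ t = Complex.exp ((m : ℂ) * t * Complex.I - (v : ℂ) * t ^ 2 / 2)) ∧
      Measure.map Z P = gaussianReal m v.toNNReal := by
  have := Measure.isProbabilityMeasure_map (μ := P) hmZ.aemeasurable
  have hchar : ∀ t : ℝ, charFun (P.map Z) t = φ t := fun t ↦ by
    rw [charFun_apply_real, integral_map hmZ.aemeasurable (by fun_prop), hφ]
  obtain ⟨m, v, hv, hmv⟩ := exists_eq_mul_I_sub_of_charFun_eq_exp fun t ↦ by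
    rw [hchar, hq, eval_eq_of_natDegree_le_two hdeg h0]
  have hφ_eq : ∀ t : ℝ, φ t = exp (m * t * I - v * t ^ 2 / 2) := fun t ↦ by
    rw [hq, eval_eq_of_natDegree_le_two hdeg h0, hmv]
  refine ⟨m, v, hv, hφ_eq, Measure.ext_of_charFun (funext fun t ↦ ?_)⟩
  rw [hchar, hφ_eq, charFun_gaussianReal, Real.coe_toNNReal _ hv, mul_comm (m : ℂ)]
end
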